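/- Shannon entropy uncertainty for a full set of MUBs: for d = 2^n and a full set of d+1 mutually unbiased bases B_1,...,B_{d+1}, every pure state |Ψ⟩ satisfies (1/(d+1)) Σ_b H(B_b||Ψ⟩) ≥ log(d+1) − 1. -/

import Mathlib

/-!
Identify a unit vector `u ∈ ℂ^d` with the traceless part `u u* - I/d` of its projector, a vector
of the Hilbert–Schmidt space `ℂ^(d × d)`. Inner products of these vectors are
`|⟨u, w⟩|² - 1/d`, so for a family of `L` mutually unbiased bases the images of the basis vectors
have Gram matrix `I - J/d` within a basis and are orthogonal across bases, while the image of `Ψ`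
has squared norm `1 - 1/d`. With `p_b(x) = |⟨v_b x, Ψ⟩|²`, a Bessel-type inequality bounds
`∑_b ∑_x (p_b(x) - 1/d)²` by `1 - 1/d`, i.e. the total collision probability `∑_b ∑_x p_b(x)²`
by `1 + (L - 1)/d`. By concavity of `log`, the average collision entropy is at least
`-log((1 + (L - 1)/d)/L)`, and Shannon entropy dominates collision entropy. For `L = d + 1` the
bound is `log(d + 1) - 1`.
-/

noncomputable section

/-- Shannon entropy (in bits). -/
def shannonEntropy2 {X : Type*} [Fintype X] (p : X → ℝ) : ℝ :=
  -∑ x, p x * Real.logb 2 (p x)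

open Finset

theorem Orthonormal.sum_sq_norm_inner_right_of_card_eq_finrank {𝕜 E κ : Type*} [RCLike 𝕜]
    [NormedAddCommGroup E] [InnerProductSpace 𝕜 E] [FiniteDimensional 𝕜 E] [Fintype κ]
    {w : κ → E} (hw : Orthonormal 𝕜 w) (hcard : Fintype.card κ = Module.finrank 𝕜 E) (x : E) :
    ∑ i, ‖inner 𝕜 (w i) x‖ ^ 2 = ‖x‖ ^ 2 := by
  simpa using (OrthonormalBasis.mk hw
    (hw.linearIndependent.span_eq_top_of_card_eq_finrank' hcard).ge).sum_sq_norm_inner_right x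

theorem sum_sub_inv_card {X : Type*} [Fintype X] {p : X → ℝ} (h : ∑ x, p x = 1) :
    ∑ x, (p x - (Fintype.card X : ℝ)⁻¹) = 0 := by
  have : Nonempty X := (nonempty_of_sum_ne_zero (h ▸ one_ne_zero)).to_type
  rw [sum_sub_distrib, h, sum_const, card_univ, nsmul_eq_mul,
    mul_inv_cancel₀ (Nat.cast_ne_zero.mpr Fintype.card_ne_zero), sub_self]

theorem sum_sub_inv_card_sq {X : Type*} [Fintype X] {p : X → ℝ} (h : ∑ x, p x = 1) :
    ∑ x, (p x - (Fintype.card X : ℝ)⁻¹) ^ 2 = ∑ x, p x ^ 2 - (Fintype.card X : ℝ)⁻¹ := by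
  set a := (Fintype.card X : ℝ)⁻¹
  calc ∑ x, (p x - a) ^ 2 = ∑ x, p x ^ 2 - a * ∑ x, p x - a * ∑ x, (p x - a) := by
        simp only [mul_sum, ← sum_sub_distrib]
        exact sum_congr rfl fun x _ => by ring
    _ = ∑ x, p x ^ 2 - a := by rw [h, sum_sub_inv_card h]; ring

theorem sum_sq_pos_of_sum_eq_one {X : Type*} [Fintype X] {p : X → ℝ} (h : ∑ x, p x = 1) :
    0 < ∑ x, p x ^ 2 := by
  have := sq_sum_le_card_mul_sum_sq (s := univ) (f := p)
  rw [h] at this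
  nlinarith [Nat.cast_nonneg (α := ℝ) (#(univ : Finset X))]

theorem sum_mul_log_le_log_sum_mul {ι : Type*} [Fintype ι] {w z : ι → ℝ} (hw : ∀ i, 0 ≤ w i)
    (hw1 : ∑ i, w i = 1) (hz : ∀ i, w i ≠ 0 → 0 < z i) :
    ∑ i, w i * Real.log (z i) ≤ Real.log (∑ i, w i * z i) := by
  classical
  have hsupp : ∀ f : ι → ℝ, ∑ i with w i ≠ 0, w i * f i = ∑ i, w i * f i :=
    fun f => sum_filter_of_ne fun i _ h => left_ne_zero_of_mul h
  rw [← hsupp, ← hsupp]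
  exact strictConcaveOn_log_Ioi.concaveOn.le_map_sum (fun i _ => hw i)
    (by rwa [sum_filter_ne_zero]) fun i hi => hz i (mem_filter.mp hi).2

theorem sum_sq_norm_le_of_gram_mulVec_eq {𝕜 E ι : Type*} [RCLike 𝕜] [NormedAddCommGroup E]
    [InnerProductSpace 𝕜 E] [Fintype ι] (g : ι → E) (y : E) (c : ι → 𝕜)
    (hc : ∀ i, inner 𝕜 (g i) y = c i) (hgram : ∀ i, ∑ j, inner 𝕜 (g i) (g j) * c j = c i) :
    ∑ i, ‖c i‖ ^ 2 ≤ ‖y‖ ^ 2 := by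
  -- `y - S` is orthogonal to every `g i`: `S` is the orthogonal projection of `y` onto their span.
  set S := ∑ j, c j • g j
  have hgS : ∀ i, inner 𝕜 (g i) S = c i := fun i => by
    simp only [S, inner_sum, inner_smul_right, mul_comm (c _), hgram]
  have hSS : inner 𝕜 S S = ((∑ i, ‖c i‖ ^ 2 : ℝ) : 𝕜) := by
    simp only [S, sum_inner, inner_smul_left, hgS, RCLike.conj_mul]
    push_cast; rfl
  have hSy : inner 𝕜 S y = ((∑ i, ‖c i‖ ^ 2 : ℝ) : 𝕜) := by
    simp only [S, sum_inner, inner_smul_left, hc, RCLike.conj_mul]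
    push_cast; rfl
  have hnormS : ‖S‖ ^ 2 = ∑ i, ‖c i‖ ^ 2 := by
    rw [← RCLike.ofReal_inj (K := 𝕜), RCLike.ofReal_pow, ← inner_self_eq_norm_sq_to_K, hSS]
  have hCS : ‖S‖ ^ 2 ≤ ‖S‖ * ‖y‖ :=
    calc ‖S‖ ^ 2 = ‖inner 𝕜 S y‖ := by
          rw [hSy, hnormS, RCLike.norm_ofReal, abs_of_nonneg (by positivity)]
      _ ≤ ‖S‖ * ‖y‖ := norm_inner_le_norm S y
  rw [← hnormS]
  nlinarith [norm_nonneg S, norm_nonneg y]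

/-- The traceless part `u u* - I/d` of the rank-one operator of `u`, as a vector of `ℂ^(κ × κ)`
with the Hilbert–Schmidt inner product. -/
def tracelessOuter {κ : Type*} [Fintype κ] [DecidableEq κ] (u : EuclideanSpace ℂ κ) :
    EuclideanSpace ℂ (κ × κ) :=
  WithLp.toLp 2 fun ij => u ij.1 * starRingEnd ℂ (u ij.2) -
    if ij.1 = ij.2 then ((Fintype.card κ : ℂ))⁻¹ else 0

theorem inner_tracelessOuter {κ : Type*} [Fintype κ] [DecidableEq κ]
    (u w : EuclideanSpace ℂ κ) :
    inner ℂ (tracelessOuter u) (tracelessOuter w) =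
      ((‖inner ℂ u w‖ ^ 2 - ‖u‖ ^ 2 / Fintype.card κ - ‖w‖ ^ 2 / Fintype.card κ
        + 1 / Fintype.card κ : ℝ) : ℂ) := by
  set d : ℂ := (Fintype.card κ : ℂ)
  have hinner : ∀ a b : EuclideanSpace ℂ κ, ∑ i, starRingEnd ℂ (a i) * b i = inner ℂ a b := by
    simp [PiLp.inner_apply, mul_comm]
  have hentry : ∀ i j : κ, inner ℂ (tracelessOuter u (i, j)) (tracelessOuter w (i, j)) =
      (starRingEnd ℂ (u i) * w i) * starRingEnd ℂ (starRingEnd ℂ (u j) * w j)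
        - if i = j then d⁻¹ * (starRingEnd ℂ (u i) * u i) + d⁻¹ * (starRingEnd ℂ (w i) * w i)
            - d⁻¹ * d⁻¹ else 0 := by
    intro i j
    by_cases h : i = j
    · subst h; simp [tracelessOuter, d]; ring
    · simp [tracelessOuter, h]; ring
  rw [PiLp.inner_apply, Fintype.sum_prod_type]
  simp only [hentry, sum_sub_distrib, sum_ite_eq, mem_univ, if_true, ← mul_sum, ← sum_mul,
    ← map_sum, hinner, sum_add_distrib, inner_self_eq_norm_sq_to_K, sum_const, card_univ,
    nsmul_eq_mul, Complex.mul_conj']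
  rw [RCLike.ofReal_eq_complex_ofReal]
  push_cast
  by_cases hd : (Fintype.card κ : ℂ) = 0
  · simp [hd, d]
  · simp only [d]
    field_simp
    ring

structure IsMutuallyUnbiased {ι κ : Type*} [Fintype κ] (v : ι → κ → EuclideanSpace ℂ κ) :
    Prop where
  orthonormal : ∀ b, Orthonormal ℂ (v b)
  sq_norm_inner : ∀ b b', b ≠ b' → ∀ x x',
    ‖inner ℂ (v b x) (v b' x')‖ ^ 2 = 1 / (Fintype.card κ : ℝ)

namespace IsMutuallyUnbiased

variable {ι κ : Type*} [Fintype κ] {v : ι → κ → EuclideanSpace ℂ κ}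

theorem sum_sq_norm_inner_eq_one (hv : IsMutuallyUnbiased v) {Ψ : EuclideanSpace ℂ κ}
    (hΨ : ‖Ψ‖ = 1) (b : ι) : ∑ x, ‖inner ℂ (v b x) Ψ‖ ^ 2 = 1 := by
  rw [(hv.orthonormal b).sum_sq_norm_inner_right_of_card_eq_finrank (by simp), hΨ, one_pow]

theorem inner_tracelessOuter [DecidableEq ι] [DecidableEq κ] (hv : IsMutuallyUnbiased v)
    (b b' : ι) (x x' : κ) :
    inner ℂ (tracelessOuter (v b x)) (tracelessOuter (v b' x')) =
      if b = b' then (if x = x' then 1 else 0) - (Fintype.card κ : ℂ)⁻¹ else 0 := by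
  have hunit : ∀ b x, ‖v b x‖ = 1 := fun b x => (hv.orthonormal b).1 x
  rw [_root_.inner_tracelessOuter, hunit, hunit]
  split_ifs with hb hx
  · subst hb hx
    simp [(hv.orthonormal b).1 x]
  · subst hb
    simp [orthonormal_iff_ite.mp (hv.orthonormal b) x x', hx]
  · rw [hv.sq_norm_inner b b' hb]
    push_cast
    ring

theorem sum_sum_sub_inv_card_sq_le [Fintype ι] (hv : IsMutuallyUnbiased v)
    {Ψ : EuclideanSpace ℂ κ} (hΨ : ‖Ψ‖ = 1) :
    ∑ b, ∑ x, (‖inner ℂ (v b x) Ψ‖ ^ 2 - (Fintype.card κ : ℝ)⁻¹) ^ 2 ≤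
      1 - (Fintype.card κ : ℝ)⁻¹ := by
  classical
  set t : ι → κ → ℝ := fun b x => ‖inner ℂ (v b x) Ψ‖ ^ 2 - (Fintype.card κ : ℝ)⁻¹
  have hsum_t : ∀ b, ∑ x, t b x = 0 := fun b =>
    sum_sub_inv_card (hv.sum_sq_norm_inner_eq_one hΨ b)
  have hnorm : ‖tracelessOuter Ψ‖ ^ 2 = 1 - (Fintype.card κ : ℝ)⁻¹ := by
    apply RCLike.ofReal_injective (K := ℂ)
    rw [RCLike.ofReal_pow, ← inner_self_eq_norm_sq_to_K, _root_.inner_tracelessOuter,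
      inner_self_eq_norm_sq_to_K, hΨ]
    exact congrArg Complex.ofReal (by simp)
  have hbessel := sum_sq_norm_le_of_gram_mulVec_eq
    (fun bx : ι × κ => tracelessOuter (v bx.1 bx.2)) (tracelessOuter Ψ)
    (fun bx => (t bx.1 bx.2 : ℂ)) ?inner ?gram
  · simpa [Fintype.sum_prod_type, hnorm] using hbessel
  case inner =>
    rintro ⟨b, x⟩
    rw [_root_.inner_tracelessOuter, hΨ, (hv.orthonormal b).1 x]
    simp [t]
  case gram =>
    rintro ⟨b, x⟩
    simp only [Fintype.sum_prod_type, hv.inner_tracelessOuter, ite_mul, zero_mul]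
    rw [Fintype.sum_eq_single b fun b' hb' => sum_eq_zero fun x' _ => if_neg (Ne.symm hb')]
    simp only [if_true, sub_mul, sum_sub_distrib, ite_mul, one_mul, zero_mul, sum_ite_eq,
      mem_univ, ← mul_sum, ← Complex.ofReal_sum, hsum_t]
    simp

theorem sum_sum_sq_norm_inner_sq_le [Fintype ι] (hv : IsMutuallyUnbiased v)
    {Ψ : EuclideanSpace ℂ κ} (hΨ : ‖Ψ‖ = 1) :
    ∑ b, ∑ x, (‖inner ℂ (v b x) Ψ‖ ^ 2) ^ 2 ≤ 1 + (Fintype.card ι - 1) / Fintype.card κ := by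
  set d := (Fintype.card κ : ℝ)
  have hexpand : ∀ b, ∑ x, (‖inner ℂ (v b x) Ψ‖ ^ 2) ^ 2 =
      ∑ x, (‖inner ℂ (v b x) Ψ‖ ^ 2 - d⁻¹) ^ 2 + d⁻¹ := fun b => by
    rw [sum_sub_inv_card_sq (hv.sum_sq_norm_inner_eq_one hΨ b)]
    ring
  calc ∑ b, ∑ x, (‖inner ℂ (v b x) Ψ‖ ^ 2) ^ 2
      = ∑ b, ∑ x, (‖inner ℂ (v b x) Ψ‖ ^ 2 - d⁻¹) ^ 2 + Fintype.card ι * d⁻¹ := by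
        simp [hexpand, sum_add_distrib]
    _ ≤ 1 - d⁻¹ + Fintype.card ι * d⁻¹ := by
        gcongr
        exact hv.sum_sum_sub_inv_card_sq_le hΨ
    _ = 1 + (Fintype.card ι - 1) / d := by ring

end IsMutuallyUnbiased

def collisionEntropy2 {X : Type*} [Fintype X] (p : X → ℝ) : ℝ :=
  -Real.logb 2 (∑ x, p x ^ 2)

theorem collisionEntropy2_le_shannonEntropy2 {X : Type*} [Fintype X] {p : X → ℝ}
    (h0 : ∀ x, 0 ≤ p x) (h1 : ∑ x, p x = 1) : collisionEntropy2 p ≤ shannonEntropy2 p := by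
  have hjensen := sum_mul_log_le_log_sum_mul h0 h1 fun x hx => (h0 x).lt_of_ne' hx
  simp only [collisionEntropy2, shannonEntropy2, Real.logb, ← mul_div_assoc, ← sum_div, sq,
    neg_le_neg_iff]
  exact div_le_div_of_nonneg_right hjensen (Real.log_nonneg one_le_two)

theorem IsMutuallyUnbiased.neg_logb_le_mean_collisionEntropy2 {ι κ : Type*} [Fintype ι]
    [Nonempty ι] [Fintype κ] {v : ι → κ → EuclideanSpace ℂ κ} (hv : IsMutuallyUnbiased v)
    {Ψ : EuclideanSpace ℂ κ} (hΨ : ‖Ψ‖ = 1) :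
    -Real.logb 2 ((1 + (Fintype.card ι - 1) / Fintype.card κ) / Fintype.card ι) ≤
      1 / Fintype.card ι * ∑ b, collisionEntropy2 fun x => ‖inner ℂ (v b x) Ψ‖ ^ 2 := by
  set L := (Fintype.card ι : ℝ)
  set c : ι → ℝ := fun b => ∑ x, (‖inner ℂ (v b x) Ψ‖ ^ 2) ^ 2
  have hL : 0 < L := Nat.cast_pos.mpr Fintype.card_pos
  have hc : ∀ b, 0 < c b := fun b => sum_sq_pos_of_sum_eq_one (hv.sum_sq_norm_inner_eq_one hΨ b)
  have hjensen : ∑ b, L⁻¹ * Real.log (c b) ≤ Real.log (∑ b, L⁻¹ * c b) :=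
    sum_mul_log_le_log_sum_mul (fun _ => inv_nonneg.mpr hL.le) (by simp [L]) fun b _ => hc b
  have hmean : ∑ b, L⁻¹ * c b ≤ (1 + (L - 1) / Fintype.card κ) / L := by
    rw [← mul_sum, inv_mul_eq_div]
    gcongr
    exact hv.sum_sum_sq_norm_inner_sq_le hΨ
  have hmean_pos : 0 < ∑ b, L⁻¹ * c b := by
    rw [← mul_sum]
    exact mul_pos (inv_pos.mpr hL) (sum_pos (fun b _ => hc b) univ_nonempty)
  calc -Real.logb 2 ((1 + (L - 1) / Fintype.card κ) / L)
      ≤ -Real.logb 2 (∑ b, L⁻¹ * c b) :=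
        neg_le_neg (Real.logb_le_logb_of_le one_lt_two hmean_pos hmean)
    _ ≤ -((∑ b, L⁻¹ * Real.log (c b)) / Real.log 2) :=
        neg_le_neg (div_le_div_of_nonneg_right hjensen (Real.log_nonneg one_le_two))
    _ = 1 / L * ∑ b, collisionEntropy2 fun x => ‖inner ℂ (v b x) Ψ‖ ^ 2 := by
        simp only [collisionEntropy2, Real.logb, c, ← mul_sum, sum_neg_distrib, ← sum_div]
        ring

/-- Shannon-entropy uncertainty relation for a full set of MUBs: for `d = 2ⁿ` and `d + 1`
mutually unbiased bases of `ℂ^d`, every pure state `Ψ` satisfies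
`(1/(d+1)) Σ_b H(B_b|Ψ) ≥ log(d+1) - 1` (logarithms base 2). -/
theorem shannon_entropy_full_mub_uncertainty {n : ℕ}
    (v : Fin (2 ^ n + 1) → Fin (2 ^ n) → EuclideanSpace ℂ (Fin (2 ^ n)))
    (horth : ∀ b, Orthonormal ℂ (v b))
    (hmub : ∀ b b', b ≠ b' → ∀ x x',
      ‖(inner ℂ (v b x) (v b' x') : ℂ)‖ ^ 2 = 1 / (2 ^ n : ℝ))
    (Ψ : EuclideanSpace ℂ (Fin (2 ^ n))) (hΨ : ‖Ψ‖ = 1) :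
    Real.logb 2 (2 ^ n + 1) - 1 ≤
      (1 / ((2 : ℝ) ^ n + 1)) *
        ∑ b, shannonEntropy2 (fun x => ‖(inner ℂ (v b x) Ψ : ℂ)‖ ^ 2) := by
  have hv : IsMutuallyUnbiased v := ⟨horth, by simpa using hmub⟩
  have hd : (2 : ℝ) ^ n ≠ 0 := by positivity
  calc Real.logb 2 (2 ^ n + 1) - 1
      = -Real.logb 2 ((1 + (Fintype.card (Fin (2 ^ n + 1)) - 1) / Fintype.card (Fin (2 ^ n))) /
          Fintype.card (Fin (2 ^ n + 1))) := by
        push_cast [Fintype.card_fin]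
        rw [add_sub_cancel_right, div_self hd, one_add_one_eq_two,
          Real.logb_div two_ne_zero (by positivity), Real.logb_self_eq_one one_lt_two]
        ring
    _ ≤ 1 / ((2 : ℝ) ^ n + 1) * ∑ b, collisionEntropy2 fun x => ‖inner ℂ (v b x) Ψ‖ ^ 2 := by
        simpa using hv.neg_logb_le_mean_collisionEntropy2 hΨ
    _ ≤ _ := by
        gcongr with b
        exact collisionEntropy2_le_shannonEntropy2 (fun _ => by positivity)
          (hv.sum_sq_norm_inner_eq_one hΨ b)
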